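/- In the degree-corrected stochastic block model setup with λ_w > 0 and λ_f ≥ 0, the smallest eigenvalue of 𝔏_{w,λ} = I_n − 𝔈_λ𝔈_λ^⊤ satisfies eigmin(𝔏_{w,λ}) ≥ λ_w / (max_k C(k,·)/n_k + λ_w) > 0, and consequently ‖𝔈_λ‖ ≤ √( (max_k C(k,·)/n_k) / (max_k C(k,·)/n_k + λ_w) ) < 1. -/

import Mathlib

/-! Apply the Schur test to `𝔈` with the weights `√(𝔇_w)`, `√(𝔇_f)`. The row sums of `𝔅` are
`C(k,·)/n_k`, at most `r (C(k,·)/n_k + λ_w)` with `r = max_k C(k,·)/n_k / (max_k C(k,·)/n_k + λ_w)`,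
and its column sums are `θ_j C(·,ℓ_j) ≤ θ_j C(·,ℓ_j) + λ_f`. Hence `‖𝔈 x‖² ≤ r ‖x‖²` and
`‖𝔈ᵀ x‖² ≤ r ‖x‖²`, so the Rayleigh quotient of `𝔏 = I − 𝔈𝔈ᵀ` is at least `1 − r`. -/

open Matrix BigOperators

/-- Spectral (ℓ2 operator) norm of a real matrix. -/
noncomputable def specNorm {m n : ℕ} (A : Matrix (Fin m) (Fin n) ℝ) : ℝ :=
  ‖LinearMap.toContinuousLinearMap (Matrix.toEuclideanLin A)‖

open Finset

section WeightedBounds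

variable {ι κ : Type*} [Fintype ι] [Fintype κ]

theorem Matrix.sum_sq_mulVec_le_of_weighted_sums_le (A : Matrix ι κ ℝ) (hA : ∀ i j, 0 ≤ A i j)
    {u : ι → ℝ} {v : κ → ℝ} (hv : ∀ j, 0 < v j) {r s : ℝ} (hr : 0 ≤ r)
    (hrow : ∀ i, ∑ j, A i j * v j ≤ r * u i) (hcol : ∀ j, ∑ i, A i j * u i ≤ s * v j)
    (x : κ → ℝ) : ∑ i, (A *ᵥ x) i ^ 2 ≤ r * s * ∑ j, x j ^ 2 := by
  have hw : ∀ i j, 0 ≤ A i j * x j ^ 2 / v j := fun i j =>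
    div_nonneg (mul_nonneg (hA i j) (sq_nonneg _)) (hv j).le
  have hcs : ∀ i, (A *ᵥ x) i ^ 2 ≤ (∑ j, A i j * v j) * ∑ j, A i j * x j ^ 2 / v j := fun i =>
    sum_sq_le_sum_mul_sum_of_sq_le_mul _
      (fun j _ => mul_nonneg (hA i j) (hv j).le) (fun j _ => hw i j)
      (fun j _ => le_of_eq (by field_simp [(hv j).ne']))
  calc ∑ i, (A *ᵥ x) i ^ 2
      ≤ ∑ i, r * u i * ∑ j, A i j * x j ^ 2 / v j := by
        gcongr with i
        exact (hcs i).trans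
          (mul_le_mul_of_nonneg_right (hrow i) (sum_nonneg fun j _ => hw i j))
    _ = r * ∑ j, x j ^ 2 / v j * ∑ i, A i j * u i := by
        simp only [mul_sum]
        rw [sum_comm]
        refine sum_congr rfl fun j _ => sum_congr rfl fun i _ => ?_
        ring
    _ ≤ r * ∑ j, x j ^ 2 / v j * (s * v j) := by
        gcongr with j
        · exact div_nonneg (sq_nonneg _) (hv j).le
        · exact hcol j
    _ = r * s * ∑ j, x j ^ 2 := by
        rw [mul_assoc, mul_sum _ _ s]
        congr 1
        exact sum_congr rfl fun j _ => by field_simp [(hv j).ne']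


theorem Matrix.one_sub_le_of_mulVec_one_sub_mul_transpose_eq_smul [DecidableEq ι]
    (A : Matrix ι κ ℝ) {c : ℝ}
    (hA : ∀ x, ∑ j, (Aᵀ *ᵥ x) j ^ 2 ≤ c * ∑ i, x i ^ 2) {μ : ℝ} {x : ι → ℝ} (hx : x ≠ 0)
    (hμ : (1 - A * Aᵀ) *ᵥ x = μ • x) : 1 - c ≤ μ := by
  have hpos : 0 < x ⬝ᵥ x := (sum_nonneg fun i _ => mul_self_nonneg (x i)).lt_of_ne'
    (dotProduct_self_eq_zero.not.2 hx)
  have hquad : μ * (x ⬝ᵥ x) = x ⬝ᵥ x - (Aᵀ *ᵥ x) ⬝ᵥ (Aᵀ *ᵥ x) := by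
    have h := congrArg (x ⬝ᵥ ·) hμ
    rw [sub_mulVec, one_mulVec, dotProduct_sub, ← mulVec_mulVec, dotProduct_mulVec,
      ← mulVec_transpose, dotProduct_smul, smul_eq_mul] at h
    linarith
  have hbound : (Aᵀ *ᵥ x) ⬝ᵥ (Aᵀ *ᵥ x) ≤ c * (x ⬝ᵥ x) := by
    simpa only [dotProduct, ← sq] using hA x
  nlinarith

variable [DecidableEq ι] [DecidableEq κ]

noncomputable def Matrix.symNormalize (a : ι → ℝ) (B : Matrix ι κ ℝ) (b : κ → ℝ) :
    Matrix ι κ ℝ :=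
  diagonal (fun i => 1 / √(a i)) * B * diagonal (fun j => 1 / √(b j))

theorem Matrix.symNormalize_apply (a : ι → ℝ) (B : Matrix ι κ ℝ) (b : κ → ℝ) (i : ι) (j : κ) :
    symNormalize a B b i j = B i j / (√(a i) * √(b j)) := by
  rw [symNormalize, mul_diagonal, diagonal_mul]
  ring

theorem Matrix.transpose_symNormalize (a : ι → ℝ) (B : Matrix ι κ ℝ) (b : κ → ℝ) :
    (symNormalize a B b)ᵀ = symNormalize b Bᵀ a := by
  ext j i
  simp only [transpose_apply, symNormalize_apply]
  ring

theorem Matrix.sum_sq_mulVec_symNormalize_le (B : Matrix ι κ ℝ) (hB : ∀ i j, 0 ≤ B i j)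
    {a : ι → ℝ} {b : κ → ℝ} (ha : ∀ i, 0 < a i) (hb : ∀ j, 0 < b j) {r s : ℝ} (hr : 0 ≤ r)
    (hrow : ∀ i, ∑ j, B i j ≤ r * a i) (hcol : ∀ j, ∑ i, B i j ≤ s * b j) (x : κ → ℝ) :
    ∑ i, (symNormalize a B b *ᵥ x) i ^ 2 ≤ r * s * ∑ j, x j ^ 2 := by
  refine sum_sq_mulVec_le_of_weighted_sums_le _ (fun i j => ?_) (u := fun i => √(a i))
    (fun j => Real.sqrt_pos.2 (hb j)) hr (fun i => ?_) (fun j => ?_) x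
  · rw [symNormalize_apply]; exact div_nonneg (hB i j) (by positivity)
  · have hai := Real.sqrt_pos.2 (ha i)
    calc ∑ j, symNormalize a B b i j * √(b j) = (∑ j, B i j) / √(a i) := by
          rw [Finset.sum_div]
          refine sum_congr rfl fun j _ => ?_
          rw [symNormalize_apply]
          field_simp [(Real.sqrt_pos.2 (hb j)).ne']
      _ ≤ r * a i / √(a i) := by gcongr; exact hrow i
      _ = r * √(a i) := by
          rw [mul_div_assoc, Real.div_sqrt]
  · have hbj := Real.sqrt_pos.2 (hb j)
    calc ∑ i, symNormalize a B b i j * √(a i) = (∑ i, B i j) / √(b j) := by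
          rw [Finset.sum_div]
          refine sum_congr rfl fun i _ => ?_
          rw [symNormalize_apply]
          field_simp [(Real.sqrt_pos.2 (ha i)).ne']
      _ ≤ s * b j / √(b j) := by gcongr; exact hcol j
      _ = s * √(b j) := by
          rw [mul_div_assoc, Real.div_sqrt]

end WeightedBounds

theorem specNorm_le_sqrt_of_sum_sq_mulVec_le {m n : ℕ} (A : Matrix (Fin m) (Fin n) ℝ) {c : ℝ}
    (hA : ∀ x, ∑ i, (A *ᵥ x) i ^ 2 ≤ c * ∑ j, x j ^ 2) : specNorm A ≤ √c := by
  refine ContinuousLinearMap.opNorm_le_bound _ (Real.sqrt_nonneg _) fun x => ?_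
  rw [LinearMap.coe_toContinuousLinearMap', EuclideanSpace.norm_eq,
    EuclideanSpace.norm_eq, ← Real.sqrt_mul' _ (sum_nonneg fun j _ => sq_nonneg _)]
  simpa only [toEuclideanLin, toLpLin_apply, PiLp.toLp_apply, Real.norm_eq_abs, sq_abs] using
    Real.sqrt_le_sqrt (hA x)

theorem Finset.sum_mul_comp_eq_sum_of_sum_fiber_eq_one {R α β : Type*} [CommSemiring R]
    [Fintype α] [Fintype β] [DecidableEq β] (f : α → β) {w : α → R}
    (hw : ∀ b, ∑ a ∈ univ.filter (fun a => f a = b), w a = 1) (g : β → R) :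
    ∑ a, w a * g (f a) = ∑ b, g b := by
  rw [← sum_fiberwise univ f]
  refine sum_congr rfl fun b _ => ?_
  rw [sum_congr rfl fun a ha => by rw [(mem_filter.1 ha).2], ← sum_mul, hw b, one_mul]

theorem Finset.sum_div_comp_eq_sum_of_card_fiber {α β : Type*} [Fintype α] [Fintype β]
    [DecidableEq β] (f : α → β) {m : β → ℕ} (hm : ∀ b, m b = #(univ.filter (fun a => f a = b)))
    (hm0 : ∀ b, 0 < m b) (g : β → ℝ) : ∑ a, g (f a) / m (f a) = ∑ b, g b := by
  simp_rw [div_eq_inv_mul]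
  refine sum_mul_comp_eq_sum_of_sum_fiber_eq_one f (fun b => ?_) g
  rw [sum_congr rfl fun a ha => by rw [(mem_filter.1 ha).2], sum_const, ← hm, nsmul_eq_mul,
    mul_inv_cancel₀ (Nat.cast_pos.2 (hm0 b)).ne']

theorem le_div_add_mul_add {x m l : ℝ} (hx : 0 ≤ x) (hxm : x ≤ m) (hl : 0 < l) :
    x ≤ m / (m + l) * (x + l) := by
  rw [div_mul_eq_mul_div, le_div_iff₀ (by linarith)]
  nlinarith

theorem stmt_7_general (n p K : ℕ) (hK : 0 < K)
    (kw : Fin n → Fin K) (ll : Fin p → Fin K)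
    (nsize : Fin K → ℕ)
    (hnsize : ∀ a, nsize a = (Finset.univ.filter (fun i => kw i = a)).card)
    (hnpos : ∀ a, 0 < nsize a)
    (θ : Fin p → ℝ) (hθ : ∀ j, 0 < θ j)
    (hθsum : ∀ a, ∑ j ∈ Finset.univ.filter (fun j => ll j = a), θ j = 1)
    (C : Matrix (Fin K) (Fin K) ℝ) (hC : ∀ a b, 0 ≤ C a b)
    (Crow : Fin K → ℝ) (hCrow : ∀ a, Crow a = ∑ b, C a b)
    (Ccol : Fin K → ℝ) (hCcol : ∀ b, Ccol b = ∑ a, C a b)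
    (Bb : Matrix (Fin n) (Fin p) ℝ)
    (hBb : ∀ i j, Bb i j = θ j * C (kw i) (ll j) / (nsize (kw i) : ℝ))
    (lamw lamf : ℝ) (hlamf : 0 ≤ lamf) (hlamw : 0 < lamw)
    (hfpos : ∀ j, 0 < θ j * Ccol (ll j) + lamf)
    (Ee : Matrix (Fin n) (Fin p) ℝ)
    (hEe : Ee = Matrix.diagonal
        (fun i => 1 / Real.sqrt (Crow (kw i) / (nsize (kw i) : ℝ) + lamw)) * Bb *
      Matrix.diagonal (fun j => 1 / Real.sqrt (θ j * Ccol (ll j) + lamf)))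
    (Lwl : Matrix (Fin n) (Fin n) ℝ) (hLwl : Lwl = 1 - Ee * Eeᵀ)
    (maxd : ℝ)
    (hmaxd : maxd = Finset.univ.sup' ⟨⟨0, hK⟩, Finset.mem_univ _⟩
      (fun a => Crow a / (nsize a : ℝ))) :
    (∀ (μ : ℝ) (x : Fin n → ℝ), x ≠ 0 → Lwl.mulVec x = μ • x →
      lamw / (maxd + lamw) ≤ μ) ∧
    0 < lamw / (maxd + lamw) ∧
    specNorm Ee ≤ Real.sqrt (maxd / (maxd + lamw)) ∧
    Real.sqrt (maxd / (maxd + lamw)) < 1 := by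
  have hnn : ∀ a, (0 : ℝ) < nsize a := fun a => Nat.cast_pos.2 (hnpos a)
  have hdeg : ∀ a, 0 ≤ Crow a / nsize a := fun a =>
    div_nonneg (hCrow a ▸ sum_nonneg fun b _ => hC a b) (hnn a).le
  have hdle : ∀ a, Crow a / nsize a ≤ maxd := fun a =>
    hmaxd ▸ le_sup' (fun a => Crow a / (nsize a : ℝ)) (mem_univ a)
  have hmaxd0 : 0 ≤ maxd := (hdeg ⟨0, hK⟩).trans (hdle _)
  have hden : 0 < maxd + lamw := by linarith
  set r := maxd / (maxd + lamw) with hr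
  have hr0 : 0 ≤ r := div_nonneg hmaxd0 hden.le
  have hr1 : r < 1 := (div_lt_one hden).2 (by linarith)
  have hB : ∀ i j, 0 ≤ Bb i j := fun i j =>
    hBb i j ▸ div_nonneg (mul_nonneg (hθ j).le (hC _ _)) (hnn _).le
  have hrow : ∀ i, ∑ j, Bb i j ≤ r * (Crow (kw i) / nsize (kw i) + lamw) := fun i => by
    simp_rw [hBb, ← sum_div, hCrow, sum_mul_comp_eq_sum_of_sum_fiber_eq_one ll hθsum, ← hCrow]
    exact le_div_add_mul_add (hdeg _) (hdle _) hlamw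
  have hcol : ∀ j, ∑ i, Bb i j ≤ 1 * (θ j * Ccol (ll j) + lamf) := fun j => by
    simp_rw [hBb, mul_div_assoc, ← mul_sum,
      sum_div_comp_eq_sum_of_card_fiber kw hnsize hnpos (fun a => C a (ll j)), ← hCcol]
    linarith
  replace hEe : Ee = symNormalize (fun i => Crow (kw i) / nsize (kw i) + lamw) Bb
      (fun j => θ j * Ccol (ll j) + lamf) := hEe
  have hdw : ∀ i, 0 < Crow (kw i) / nsize (kw i) + lamw := fun i =>
    add_pos_of_nonneg_of_pos (hdeg _) hlamw
  have hE : ∀ x, ∑ i, (Ee *ᵥ x) i ^ 2 ≤ r * 1 * ∑ j, x j ^ 2 := by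
    rw [hEe]
    exact sum_sq_mulVec_symNormalize_le Bb hB hdw hfpos hr0 hrow hcol
  have hET : ∀ x, ∑ j, (Eeᵀ *ᵥ x) j ^ 2 ≤ 1 * r * ∑ i, x i ^ 2 := by
    rw [hEe, transpose_symNormalize]
    exact sum_sq_mulVec_symNormalize_le Bbᵀ (fun j i => hB i j) hfpos hdw zero_le_one hcol hrow
  have h1r : lamw / (maxd + lamw) = 1 - r := by
    rw [hr]; field_simp; ring
  refine ⟨fun μ x hx hμ => ?_, by linarith, ?_, Real.sqrt_one ▸ Real.sqrt_lt_sqrt hr0 hr1⟩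
  · rw [h1r, ← one_mul r]
    exact one_sub_le_of_mulVec_one_sub_mul_transpose_eq_smul Ee hET hx (hLwl ▸ hμ)
  · exact specNorm_le_sqrt_of_sum_sq_mulVec_le Ee (by simpa only [mul_one] using hE)

/-- in the DCSBM with `λ_w > 0` and `λ_f ≥ 0`, the smallest eigenvalue
of `𝔏_{w,λ} = I − 𝔈_λ𝔈_λ^⊤` is at least `λ_w/(max_k C(k,·)/n_k + λ_w) > 0`, and
`‖𝔈_λ‖ ≤ √((max_k C(k,·)/n_k)/(max_k C(k,·)/n_k + λ_w)) < 1`. -/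
theorem stmt_7 (n p K : ℕ) (hn : 0 < n) (hp : 0 < p) (hK : 0 < K)
    (kw : Fin n → Fin K) (ll : Fin p → Fin K)
    (nsize : Fin K → ℕ)
    (hnsize : ∀ a, nsize a = (Finset.univ.filter (fun i => kw i = a)).card)
    (hnpos : ∀ a, 0 < nsize a)
    (θ : Fin p → ℝ) (hθ : ∀ j, 0 < θ j)
    (hθsum : ∀ a, ∑ j ∈ Finset.univ.filter (fun j => ll j = a), θ j = 1)
    (C : Matrix (Fin K) (Fin K) ℝ) (hC : ∀ a b, 0 ≤ C a b)
    (Crow : Fin K → ℝ) (hCrow : ∀ a, Crow a = ∑ b, C a b)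
    (Ccol : Fin K → ℝ) (hCcol : ∀ b, Ccol b = ∑ a, C a b)
    (Bb : Matrix (Fin n) (Fin p) ℝ)
    (hBb : ∀ i j, Bb i j = θ j * C (kw i) (ll j) / (nsize (kw i) : ℝ))
    (lamw lamf : ℝ) (hlamf : 0 ≤ lamf) (hlamw : 0 < lamw)
    (hfpos : ∀ j, 0 < θ j * Ccol (ll j) + lamf)
    (Ee : Matrix (Fin n) (Fin p) ℝ)
    (hEe : Ee = Matrix.diagonal
        (fun i => 1 / Real.sqrt (Crow (kw i) / (nsize (kw i) : ℝ) + lamw)) * Bb *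
      Matrix.diagonal (fun j => 1 / Real.sqrt (θ j * Ccol (ll j) + lamf)))
    (Lwl : Matrix (Fin n) (Fin n) ℝ) (hLwl : Lwl = 1 - Ee * Eeᵀ)
    (maxd : ℝ)
    (hmaxd : maxd = Finset.univ.sup' ⟨⟨0, hK⟩, Finset.mem_univ _⟩
      (fun a => Crow a / (nsize a : ℝ))) :
    (∀ (μ : ℝ) (x : Fin n → ℝ), x ≠ 0 → Lwl.mulVec x = μ • x →
      lamw / (maxd + lamw) ≤ μ) ∧
    0 < lamw / (maxd + lamw) ∧
    specNorm Ee ≤ Real.sqrt (maxd / (maxd + lamw)) ∧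
    Real.sqrt (maxd / (maxd + lamw)) < 1 :=
  stmt_7_general n p K hK kw ll nsize hnsize hnpos θ hθ hθsum C hC Crow hCrow Ccol hCcol Bb hBb lamw
    lamf hlamf hlamw hfpos Ee hEe Lwl hLwl maxd hmaxd
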